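/- Every rack covering f: A → Fr(B) with free rack codomain is a trivial extension: whenever x ∈ A and a_1, ..., a_n ∈ A with signs δ_i ∈ {−1,1} satisfy f(x ◁^{δ_1} a_1 ··· ◁^{δ_n} a_n) = f(x), then x ◁^{δ_1} a_1 ··· ◁^{δ_n} a_n = x. -/

import Mathlib

/-- A rack: a set with operations `◁`, `◁⁻¹` satisfying (R1) and (R2). -/
class PaperRack (X : Type*) where
  act : X → X → X
  inv : X → X → X
  r1a : ∀ x y, inv (act x y) y = x
  r1b : ∀ x y, act (inv x y) y = x
  r2 : ∀ x y z, act (act x y) z = act (act x z) (act y z)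

infixl:70 " ◁ " => PaperRack.act
infixl:70 " ◁⁻¹ " => PaperRack.inv

/-- The free rack `Fr(B) = B × F(B)`, with
`(b,g) ◁ (c,h) = (b, g·h⁻¹·c·h)` and `(b,g) ◁⁻¹ (c,h) = (b, g·h⁻¹·c⁻¹·h)`. -/
instance freeRack (B : Type*) : PaperRack (B × FreeGroup B) where
  act p q := (p.1, p.2 * q.2⁻¹ * FreeGroup.of q.1 * q.2)
  inv p q := (p.1, p.2 * q.2⁻¹ * (FreeGroup.of q.1)⁻¹ * q.2)
  r1a p q := by cases p; simp [mul_assoc]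
  r1b p q := by cases p; simp [mul_assoc]
  r2 p q r := by cases p; simp [mul_assoc]

/-- `x ◁^{δ₁} a₁ ⋯ ◁^{δₙ} aₙ`: the successive action on `x` of a list of elements
with signs (`true` for `◁`, `false` for `◁⁻¹`). -/
def foldAct {X : Type*} [PaperRack X] (x : X) (l : List (X × Bool)) : X :=
  l.foldl (fun y p => if p.2 then y ◁ p.1 else y ◁⁻¹ p.1) x


/-!
The covering condition says that the right translation `x ↦ x ◁ a` depends only on `f a`.
Choosing lifts `s b` of the generators `(b, 1)`, let `F(B)` act on `A` on the right with `b`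
acting as `· ◁ s b`. Induction on `g`, using that `· ◁^{±1} s b` moves the fibre over `(c, g)`
to the fibre over `(c, g b^{±1})`, shows that every `a` over `(c, g)` acts as `g⁻¹ c g`, just
as `(c, g)` does in `Fr(B)`. Hence `x ◁^{δ₁} a₁ ⋯ ◁^{δₙ} aₙ` is `x` acted on by the product
`w` of the words `(g_i⁻¹ c_i g_i)^{δ_i}`, while its image is `((f x).1, (f x).2 * w)`; so the
hypothesis forces `w = 1`.
-/

namespace PaperRack

variable {X : Type*} [PaperRack X]

def actPerm (a : X) : (Equiv.Perm X)ᵐᵒᵖ :=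
  .op ⟨(· ◁ a), (· ◁⁻¹ a), fun x => r1a x a, fun x => r1b x a⟩

@[simp]
theorem actPerm_apply (a x : X) : (actPerm a).unop x = x ◁ a := rfl

@[simp]
theorem actPerm_symm_apply (a x : X) : (actPerm a).unop.symm x = x ◁⁻¹ a := rfl

theorem actPerm_act (y z : X) : actPerm (y ◁ z) = (actPerm z)⁻¹ * actPerm y * actPerm z := by
  refine MulOpposite.unop_injective (Equiv.ext fun x => ?_)
  simp only [MulOpposite.unop_mul, MulOpposite.unop_inv, Equiv.Perm.mul_apply,
    Equiv.Perm.inv_def, actPerm_apply, actPerm_symm_apply]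
  rw [r2 (x ◁⁻¹ z), r1b]

theorem actPerm_inv (y z : X) : actPerm (y ◁⁻¹ z) = actPerm z * actPerm y * (actPerm z)⁻¹ := by
  conv_rhs => rw [← r1b y z, actPerm_act]
  group

theorem actPerm_eq_of_covering {Y : Type*} {f : X → Y}
    (hcov : ∀ a b x : X, f a = f b → (x ◁ a) ◁⁻¹ b = x) {a b : X} (hab : f a = f b) :
    actPerm a = actPerm b :=
  MulOpposite.unop_injective <| Equiv.ext fun x =>
    (r1b (x ◁ a) b).symm.trans (congrArg (· ◁ b) (hcov a b x hab))

theorem map_inv_of_map_act {Y : Type*} [PaperRack Y] {f : X → Y}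
    (hf : ∀ x y, f (x ◁ y) = f x ◁ f y) (x y : X) : f (x ◁⁻¹ y) = f x ◁⁻¹ f y := by
  rw [← r1a (f (x ◁⁻¹ y)) (f y), ← hf, r1b]

theorem foldAct_cons (x : X) (p : X × Bool) (l : List (X × Bool)) :
    foldAct x (p :: l) = foldAct (if p.2 then x ◁ p.1 else x ◁⁻¹ p.1) l :=
  rfl

end PaperRack

def signedProd {X G : Type*} [Group G] (t : X → G) (l : List (X × Bool)) : G :=
  (l.map fun p => if p.2 then t p.1 else (t p.1)⁻¹).prod

section SignedProd

variable {X Y G H : Type*} [Group G] [Group H]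

@[simp]
theorem signedProd_nil (t : X → G) : signedProd t [] = 1 := rfl

@[simp]
theorem signedProd_cons (t : X → G) (p : X × Bool) (l : List (X × Bool)) :
    signedProd t (p :: l) = (if p.2 then t p.1 else (t p.1)⁻¹) * signedProd t l :=
  List.prod_cons

theorem map_signedProd (φ : G →* H) (t : X → G) (l : List (X × Bool)) :
    φ (signedProd t l) = signedProd (φ ∘ t) l := by
  induction l with
  | nil => simp
  | cons p l ih => rcases p with ⟨a, _ | _⟩ <;> simp [ih]

theorem signedProd_map (t : Y → G) (g : X → Y) (l : List (X × Bool)) :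
    signedProd t (l.map (Prod.map g id)) = signedProd (t ∘ g) l := by
  induction l with
  | nil => rfl
  | cons p l ih => simp [ih]

end SignedProd

namespace PaperRack

variable {X : Type*} [PaperRack X]

theorem foldAct_eq_signedProd_actPerm (x : X) (l : List (X × Bool)) :
    foldAct x l = (signedProd actPerm l).unop x := by
  induction l generalizing x with
  | nil => rfl
  | cons p l ih => cases h : p.2 <;> simp [foldAct_cons, ih, h]

theorem map_foldAct {Y : Type*} [PaperRack Y] {f : X → Y} (hf : ∀ x y, f (x ◁ y) = f x ◁ f y)
    (x : X) (l : List (X × Bool)) : f (foldAct x l) = foldAct (f x) (l.map (Prod.map f id)) := by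
  induction l generalizing x with
  | nil => rfl
  | cons p l ih => cases h : p.2 <;> simp [foldAct_cons, ih, h, hf, map_inv_of_map_act hf]

end PaperRack

def freeRackConj {B : Type*} (q : B × FreeGroup B) : FreeGroup B :=
  q.2⁻¹ * FreeGroup.of q.1 * q.2

section FreeRack

variable {B : Type*}

theorem freeRack_act (p q : B × FreeGroup B) : p ◁ q = (p.1, p.2 * freeRackConj q) := by
  show (p.1, p.2 * q.2⁻¹ * FreeGroup.of q.1 * q.2) = _
  simp only [freeRackConj, mul_assoc]

theorem freeRack_inv (p q : B × FreeGroup B) : p ◁⁻¹ q = (p.1, p.2 * (freeRackConj q)⁻¹) := by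
  show (p.1, p.2 * q.2⁻¹ * (FreeGroup.of q.1)⁻¹ * q.2) = _
  simp only [freeRackConj, mul_inv_rev, inv_inv, mul_assoc]

@[simp]
theorem freeRackConj_of_one (b : B) : freeRackConj (b, (1 : FreeGroup B)) = FreeGroup.of b := by
  simp [freeRackConj]

theorem freeRackConj_act (p q : B × FreeGroup B) :
    freeRackConj (p ◁ q) = (freeRackConj q)⁻¹ * freeRackConj p * freeRackConj q := by
  simp only [freeRack_act, freeRackConj]
  group

theorem freeRackConj_inv (p q : B × FreeGroup B) :
    freeRackConj (p ◁⁻¹ q) = freeRackConj q * freeRackConj p * (freeRackConj q)⁻¹ := by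
  simp only [freeRack_inv, freeRackConj]
  group

theorem freeRack_foldAct (p : B × FreeGroup B) (l : List ((B × FreeGroup B) × Bool)) :
    foldAct p l = (p.1, p.2 * signedProd freeRackConj l) := by
  induction l generalizing p with
  | nil => simp [foldAct]
  | cons q l ih =>
    cases h : q.2 <;> simp [PaperRack.foldAct_cons, ih, h, freeRack_act, freeRack_inv, mul_assoc]

end FreeRack

section Covering

open PaperRack

variable {A B : Type*} [PaperRack A] {f : A → B × FreeGroup B}
  (hact : ∀ x y : A, f (x ◁ y) = f x ◁ f y)
include hact

theorem actPerm_act_eq_map_freeRackConj (ψ : FreeGroup B →* (Equiv.Perm A)ᵐᵒᵖ) {y z : A}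
    (hy : actPerm y = ψ (freeRackConj (f y))) (hz : actPerm z = ψ (freeRackConj (f z))) :
    actPerm (y ◁ z) = ψ (freeRackConj (f (y ◁ z))) := by
  rw [actPerm_act, hact, freeRackConj_act, map_mul, map_mul, map_inv, hy, hz]

theorem actPerm_inv_eq_map_freeRackConj (ψ : FreeGroup B →* (Equiv.Perm A)ᵐᵒᵖ) {y z : A}
    (hy : actPerm y = ψ (freeRackConj (f y))) (hz : actPerm z = ψ (freeRackConj (f z))) :
    actPerm (y ◁⁻¹ z) = ψ (freeRackConj (f (y ◁⁻¹ z))) := by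
  rw [actPerm_inv, map_inv_of_map_act hact, freeRackConj_inv, map_mul, map_mul, map_inv, hy, hz]

theorem actPerm_eq_lift_freeRackConj (hcov : ∀ a b x : A, f a = f b → (x ◁ a) ◁⁻¹ b = x)
    {s : B → A} (hs : ∀ b, f (s b) = (b, 1)) (a : A) :
    actPerm a = FreeGroup.lift (actPerm ∘ s) (freeRackConj (f a)) := by
  set ψ := FreeGroup.lift (actPerm ∘ s)
  have hgen (b : B) : actPerm (s b) = ψ (freeRackConj (f (s b))) := by
    simp [hs, ψ, FreeGroup.lift_apply_of]
  suffices ∀ g, ∀ a, (f a).2 = g → actPerm a = ψ (freeRackConj (f a)) from this _ a rfl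
  intro g
  induction (FreeGroup.closure_range_of B).symm ▸ Subgroup.mem_top g
    using Subgroup.closure_induction_right with
  | one =>
    intro a ha
    have hfa : f a = f (s (f a).1) := by rw [hs, ← ha]
    rw [actPerm_eq_of_covering hcov hfa, hgen, ← hfa]
  | mul_right g _ _ hb ih =>
    obtain ⟨b, rfl⟩ := hb
    intro a ha
    have ih' := ih (a ◁⁻¹ s b) (by simp [map_inv_of_map_act hact, hs, freeRack_inv, ha])
    rw [← r1b a (s b)]
    exact actPerm_act_eq_map_freeRackConj hact ψ ih' (hgen b)
  | mul_inv_cancel g _ _ hb ih =>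
    obtain ⟨b, rfl⟩ := hb
    intro a ha
    have ih' := ih (a ◁ s b) (by simp [hact, hs, freeRack_act, ha])
    rw [← r1a a (s b)]
    exact actPerm_inv_eq_map_freeRackConj hact ψ ih' (hgen b)

end Covering

theorem covering_over_free_rack_is_trivial_general {A B : Type*} [PaperRack A]
    (f : A → B × FreeGroup B)
    (hact : ∀ x y : A, f (x ◁ y) = f x ◁ f y)
    (hsurj : Function.Surjective f)
    (hcov : ∀ a b x : A, f a = f b → (x ◁ a) ◁⁻¹ b = x) :
    ∀ (x : A) (l : List (A × Bool)),
      f (foldAct x l) = f x → foldAct x l = x := by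
  intro x l hloop
  choose s hs using fun b => hsurj (b, 1)
  have hperm : PaperRack.actPerm = FreeGroup.lift (PaperRack.actPerm ∘ s) ∘ freeRackConj ∘ f :=
    funext (actPerm_eq_lift_freeRackConj hact hcov hs)
  have hword : signedProd (freeRackConj ∘ f) l = 1 := by
    rw [PaperRack.map_foldAct hact, freeRack_foldAct, signedProd_map] at hloop
    simpa using congrArg Prod.snd hloop
  rw [PaperRack.foldAct_eq_signedProd_actPerm, hperm, ← map_signedProd, hword, map_one]
  rfl

/-- Every rack covering `f : A → Fr(B)` with free codomain is a trivial
extension: it reflects loops, i.e. whenever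
`f (x ◁^{δ₁} a₁ ⋯ ◁^{δₙ} aₙ) = f x` one has `x ◁^{δ₁} a₁ ⋯ ◁^{δₙ} aₙ = x`. -/
theorem covering_over_free_rack_is_trivial {A B : Type*} [PaperRack A]
    (f : A → B × FreeGroup B)
    (hact : ∀ x y : A, f (x ◁ y) = f x ◁ f y)
    (hinv : ∀ x y : A, f (x ◁⁻¹ y) = f x ◁⁻¹ f y)
    (hsurj : Function.Surjective f)
    (hcov : ∀ a b x : A, f a = f b → (x ◁ a) ◁⁻¹ b = x) :
    ∀ (x : A) (l : List (A × Bool)),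
      f (foldAct x l) = f x → foldAct x l = x :=
  covering_over_free_rack_is_trivial_general f hact hsurj hcov
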